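/- For each n ≥ 2, with the common strategy fₘ(x₁,…,x_{n-1}) = m·x₁⋯x_{n-1}, the winning probability pₘ = ∫_{[0,1]^n} ε(m x₁⋯xₙ) dΛ^n converges to 1/2 as m → ∞. -/

import Mathlib

open MeasureTheory Filter

/-- `ε(t) = ⌊t⌋ - 2⌊t/2⌋`, the parity of `⌊t⌋`. -/
noncomputable def eps (t : ℝ) : ℝ := (⌊t⌋ : ℝ) - 2 * (⌊t / 2⌋ : ℝ)

/-!
Integrating out the first coordinate leaves `∫₀¹ ε(c t) dt = c⁻¹ ∫₀^c ε` with `c = m x₂⋯xₙ`.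
As `c → ∞` this tends to the mean `1/2` of the `2`-periodic function `ε`, and `x₂⋯xₙ > 0` almost
everywhere, so dominated convergence (`0 ≤ ε ≤ 1`) passes the limit through the outer integral.
-/

open Topology

lemma tendsto_floor_div_const_div_atTop {T : ℝ} (hT : 0 < T) :
    Tendsto (fun t : ℝ => (⌊t / T⌋ : ℝ) / t) atTop (𝓝 T⁻¹) := by
  refine (tendsto_nat_floor_mul_div_atTop (inv_nonneg.2 hT.le)).congr' ?_
  filter_upwards [eventually_ge_atTop 0] with t ht
  rw [inv_mul_eq_div, natCast_floor_eq_intCast_floor (div_nonneg ht hT.le)]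

namespace Function.Periodic

variable {g : ℝ → ℝ} {T : ℝ}

theorem tendsto_inv_mul_intervalIntegral (hg : Periodic g T) (hT : 0 < T)
    (h_int : IntervalIntegrable g volume 0 T) :
    Tendsto (fun t => t⁻¹ * ∫ x in 0..t, g x) atTop (𝓝 ((∫ x in 0..T, g x) / T)) := by
  set I := ∫ x in 0..T, g x
  have hlim : ∀ C : ℝ, Tendsto (fun t : ℝ => t⁻¹ * (C + ⌊t / T⌋ • I)) atTop (𝓝 (I / T)) := by
    intro C
    have h := (tendsto_inv_atTop_zero.mul_const C).add
      ((tendsto_floor_div_const_div_atTop hT).mul_const I)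
    rw [zero_mul, zero_add, ← div_eq_inv_mul] at h
    refine h.congr' ?_
    filter_upwards with t
    rw [zsmul_eq_mul]
    ring
  set F := fun t => ∫ x in 0..t, g x
  refine tendsto_of_tendsto_of_tendsto_of_le_of_le' (hlim (sInf (F '' Set.Icc 0 T)))
    (hlim (sSup (F '' Set.Icc 0 T))) ?_ ?_ <;>
    filter_upwards [eventually_ge_atTop 0] with t ht <;>
    gcongr
  · exact hg.sInf_add_zsmul_le_integral_of_pos h_int hT t
  · exact hg.integral_le_sSup_add_zsmul_of_pos h_int hT t

theorem tendsto_intervalIntegral_comp_mul (hg : Periodic g T) (hT : 0 < T)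
    (h_int : IntervalIntegrable g volume 0 T) :
    Tendsto (fun c => ∫ x in 0..1, g (c * x)) atTop (𝓝 ((∫ x in 0..T, g x) / T)) := by
  refine (hg.tendsto_inv_mul_intervalIntegral hT h_int).congr' ?_
  filter_upwards [eventually_gt_atTop 0] with c hc
  rw [intervalIntegral.integral_comp_mul_left _ hc.ne', mul_zero, mul_one, smul_eq_mul]

end Function.Periodic

theorem integral_pi_fin_succ {α E : Type*} [MeasurableSpace α] [NormedAddCommGroup E]
    [NormedSpace ℝ E] (μ : Measure α) [SigmaFinite μ] {k : ℕ} {f : (Fin (k + 1) → α) → E}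
    (hf : Integrable f (Measure.pi fun _ => μ)) :
    ∫ x, f x ∂Measure.pi (fun _ => μ) = ∫ y, ∫ t, f (Fin.cons t y) ∂μ ∂Measure.pi (fun _ => μ) := by
  have he := (measurePreserving_piFinSuccAbove (fun _ : Fin (k + 1) => μ) 0).symm
  rw [← he.integral_comp', integral_prod_symm]
  · simp [Fin.insertNthEquiv, Fin.insertNth_zero']
  · exact (he.integrable_comp_emb (MeasurableEquiv.measurableEmbedding _)).2 hf

theorem tendsto_integral_of_ae_tendsto_of_norm_le {α E ι : Type*} [MeasurableSpace α]
    [NormedAddCommGroup E] [NormedSpace ℝ E] [CompleteSpace E] {μ : Measure α}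
    [IsProbabilityMeasure μ] {l : Filter ι} [l.IsCountablyGenerated] {F : ι → α → E} {c : E}
    (C : ℝ) (hF : ∀ i, AEStronglyMeasurable (F i) μ) (h_bound : ∀ i, ∀ᵐ x ∂μ, ‖F i x‖ ≤ C)
    (h_lim : ∀ᵐ x ∂μ, Tendsto (F · x) l (𝓝 c)) :
    Tendsto (fun i => ∫ x, F i x ∂μ) l (𝓝 c) := by
  have := tendsto_integral_filter_of_dominated_convergence (fun _ => C)
    (.of_forall hF) (.of_forall h_bound) (integrable_const C) h_lim
  rwa [integral_const, probReal_univ, one_smul] at this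

lemma ae_pi_prod_pos {ι : Type*} [Fintype ι] {μ : Measure ℝ} [SigmaFinite μ]
    (h : ∀ᵐ t ∂μ, 0 < t) : ∀ᵐ y ∂Measure.pi (fun _ : ι => μ), 0 < ∏ i, y i := by
  have hcoord : ∀ i, ∀ᵐ y ∂Measure.pi (fun _ : ι => μ), 0 < y i := fun _ =>
    Measure.tendsto_eval_ae_ae.eventually h
  filter_upwards [ae_all_iff.2 hcoord] with y hy using Finset.prod_pos fun i _ => hy i

lemma measurable_const_mul_prod {ι : Type*} [Fintype ι] (c : ℝ) :
    Measurable fun x : ι → ℝ => c * ∏ i, x i :=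
  measurable_const.mul (Finset.measurable_prod _ fun i _ => measurable_pi_apply i)

lemma eps_eq_floor_emod_two (t : ℝ) : eps t = ((⌊t⌋ % 2 : ℤ) : ℝ) := by
  rw [eps, Int.emod_def, show (2 : ℝ) = ((2 : ℕ) : ℝ) by norm_num, Int.floor_div_natCast]
  push_cast
  ring

lemma eps_nonneg (t : ℝ) : 0 ≤ eps t := by
  rw [eps_eq_floor_emod_two]; exact_mod_cast Int.emod_nonneg _ two_ne_zero

lemma eps_le_one (t : ℝ) : eps t ≤ 1 := by
  rw [eps_eq_floor_emod_two]; exact_mod_cast Int.lt_add_one_iff.mp (Int.emod_lt_of_pos _ two_pos)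

lemma norm_eps_le_one (t : ℝ) : ‖eps t‖ ≤ 1 := by
  rw [Real.norm_of_nonneg (eps_nonneg t)]; exact eps_le_one t

lemma eps_periodic : Function.Periodic eps 2 := fun t => by
  simp only [eps_eq_floor_emod_two, show t + 2 = t + ((2 : ℤ) : ℝ) by norm_num,
    Int.floor_add_intCast, Int.add_emod_right]

lemma measurable_eps : Measurable eps := by
  unfold eps; fun_prop

lemma eps_eq_zero_of_mem_Ico {t : ℝ} (ht : t ∈ Set.Ico (0 : ℝ) 1) : eps t = 0 := by
  simp [eps_eq_floor_emod_two, Int.floor_eq_zero_iff.2 ht]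

lemma eps_eq_one_of_mem_Ico {t : ℝ} (ht : t ∈ Set.Ico (1 : ℝ) 2) : eps t = 1 := by
  have : ⌊t⌋ = 1 := Int.floor_eq_iff.2 ⟨by exact_mod_cast ht.1, by norm_num; exact ht.2⟩
  simp [eps_eq_floor_emod_two, this]

lemma intervalIntegrable_eps (a b : ℝ) : IntervalIntegrable eps volume a b :=
  (intervalIntegrable_const (c := (1 : ℝ))).mono_fun measurable_eps.aestronglyMeasurable
    (ae_of_all _ fun t => (norm_eps_le_one t).trans_eq norm_one.symm)

lemma intervalIntegral_eps_zero_two : ∫ t in (0 : ℝ)..2, eps t = 1 := by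
  have h01 : ∫ t in (0 : ℝ)..1, eps t = 0 := by
    rw [intervalIntegral.integral_of_le zero_le_one, setIntegral_congr_set Ico_ae_eq_Ioc.symm,
      setIntegral_congr_fun measurableSet_Ico fun t ht => eps_eq_zero_of_mem_Ico ht]
    simp
  have h12 : ∫ t in (1 : ℝ)..2, eps t = 1 := by
    rw [intervalIntegral.integral_of_le one_le_two, setIntegral_congr_set Ico_ae_eq_Ioc.symm,
      setIntegral_congr_fun measurableSet_Ico fun t ht => eps_eq_one_of_mem_Ico ht]
    norm_num
  rw [← intervalIntegral.integral_add_adjacent_intervals (intervalIntegrable_eps 0 1)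
    (intervalIntegrable_eps 1 2), h01, h12, zero_add]

lemma tendsto_setIntegral_eps_mul :
    Tendsto (fun c => ∫ t in Set.Ioc 0 1, eps (c * t)) atTop (𝓝 (1 / 2)) := by
  have h := eps_periodic.tendsto_intervalIntegral_comp_mul two_pos (intervalIntegrable_eps 0 2)
  simpa only [intervalIntegral.integral_of_le zero_le_one, intervalIntegral_eps_zero_two] using h

lemma integrable_eps_comp {α : Type*} [MeasurableSpace α] {μ : Measure α} [IsFiniteMeasure μ]
    {f : α → ℝ} (hf : Measurable f) : Integrable (fun x => eps (f x)) μ :=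
  .of_bound (measurable_eps.comp hf).aestronglyMeasurable 1
    (ae_of_all _ fun _ => norm_eps_le_one _)

lemma norm_integral_eps_comp_le_one {α : Type*} [MeasurableSpace α] {μ : Measure α}
    [IsProbabilityMeasure μ] (f : α → ℝ) : ‖∫ x, eps (f x) ∂μ‖ ≤ 1 :=
  (norm_integral_le_of_norm_le_const (ae_of_all _ fun _ => norm_eps_le_one _)).trans_eq (by simp)

/-- With the common strategy `fₘ(x₁,…,x_{n-1}) = m·x₁⋯x_{n-1}`, the winning probability
`pₘ = ∫_{[0,1]^n} ε(m x₁⋯xₙ) dΛⁿ` converges to `1/2` as `m → ∞`. -/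
theorem product_strategy_tendsto_half (n : ℕ) (hn : 2 ≤ n) :
    Tendsto (fun m : ℕ =>
        ∫ x in Set.univ.pi (fun _ : Fin n => Set.Icc (0 : ℝ) 1),
          eps ((m : ℝ) * ∏ i : Fin n, x i))
      atTop (nhds (1 / 2)) := by
  obtain ⟨k, rfl⟩ : ∃ k, n = k + 1 := ⟨n - 1, by omega⟩
  -- `Ioc` rather than `Icc`: the coordinates are then positive and `∫ ∂ρ` is `∫ in 0..1`.
  set ρ : Measure ℝ := volume.restrict (Set.Ioc 0 1)
  have : IsProbabilityMeasure ρ := ⟨by simp [ρ]⟩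
  have hcube : volume.restrict (Set.univ.pi fun _ : Fin (k + 1) => Set.Icc (0 : ℝ) 1) =
      Measure.pi fun _ => ρ := by
    rw [volume_pi, Measure.restrict_pi_pi, ← Measure.restrict_congr_set Ioc_ae_eq_Icc]
  have hfubini : ∀ m : ℕ, ∫ x : Fin (k + 1) → ℝ, eps (m * ∏ i, x i) ∂(Measure.pi fun _ => ρ) =
      ∫ y, ∫ t, eps ((m * ∏ j, y j) * t) ∂ρ ∂(Measure.pi fun _ : Fin k => ρ) := fun m => by
    rw [integral_pi_fin_succ ρ (integrable_eps_comp (measurable_const_mul_prod m))]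
    congr! 5 with y t
    rw [Fin.prod_univ_succ, Fin.cons_zero]
    simp only [Fin.cons_succ]
    ring
  simp only [hcube, hfubini]
  refine tendsto_integral_of_ae_tendsto_of_norm_le 1 (fun m => ?_)
    (fun _ => ae_of_all _ fun _ => norm_integral_eps_comp_le_one _) ?_
  · exact (measurable_eps.comp ((measurable_const_mul_prod m).comp measurable_fst |>.mul
      measurable_snd)).stronglyMeasurable.integral_prod_right' |>.aestronglyMeasurable
  · filter_upwards [ae_pi_prod_pos (ae_restrict_mem measurableSet_Ioc |>.mono fun _ ht => ht.1)]
      with y hy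
    exact tendsto_setIntegral_eps_mul.comp (tendsto_natCast_atTop_atTop.atTop_mul_const hy)
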